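/- For each n ∈ ℤ, the basis vector eₙ is an analytic vector for the operator A₀ defined by A₀eₘ = -i·m·(e_{m+1} - e_{m-1}): the series Σ_{k≥0} (|θ|ᵏ/k!)·‖A₀ᵏeₙ‖ converges for all complex θ with |θ| < 1/2. -/

import Mathlib

/-- The canonical basis vector `eₙ`, as a finitely supported function. -/
noncomputable def e (n : ℤ) : ℤ →₀ ℂ := Finsupp.single n 1

/-- The operator `A₀` acting on finite linear combinations of basis vectors by
`A₀ eₙ = -i n (e_{n+1} - e_{n-1})`. -/
noncomputable def A0 : Module.End ℂ (ℤ →₀ ℂ) :=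
  Finsupp.lsum ℂ fun n : ℤ =>
    LinearMap.toSpanSingleton ℂ (ℤ →₀ ℂ)
      ((-Complex.I * (n : ℂ)) • (Finsupp.single (n + 1) 1 - Finsupp.single (n - 1) 1))

/-- The ℓ² norm of a finitely supported function. -/
noncomputable def l2norm (x : ℤ →₀ ℂ) : ℝ := Real.sqrt (∑ m ∈ x.support, ‖x m‖ ^ 2)

/-!
Work with the ℓ¹ norm, which dominates the ℓ² norm. `A₀` moves each index by one and multiplies
the coefficient at `m` by a scalar of modulus `|m|`, so `A₀ᵏ eₙ` is supported in `|m| ≤ |n| + k`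
and `‖A₀ᵏ eₙ‖₁ ≤ 2ᵏ |n| (|n| + 1) ⋯ (|n| + k - 1) ≤ 2ᵏ k! C(|n| + k, k)`. The series is thus
dominated by `Σ C(|n| + k, k) (2|θ|)ᵏ`, which converges for `2|θ| < 1`.
-/

open Finsupp

section L1Norm

variable {α β 𝕜 E : Type*} [NormedAddCommGroup E]

noncomputable def l1norm (x : α →₀ E) : ℝ := x.sum fun _ c => ‖c‖

lemma l1norm_eq_sum_of_support_subset {x : α →₀ E} {s : Finset α} (h : x.support ⊆ s) :
    l1norm x = ∑ m ∈ s, ‖x m‖ :=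
  Finsupp.sum_of_support_subset x h _ fun _ _ => norm_zero

lemma l1norm_nonneg (x : α →₀ E) : 0 ≤ l1norm x :=
  Finset.sum_nonneg fun _ _ => norm_nonneg _

lemma l1norm_zero : l1norm (0 : α →₀ E) = 0 := by
  simp [l1norm]

lemma l1norm_single (a : α) (c : E) : l1norm (single a c) = ‖c‖ := by
  classical
  rw [l1norm_eq_sum_of_support_subset support_single_subset, Finset.sum_singleton,
    single_eq_same]

lemma l1norm_add_le (x y : α →₀ E) : l1norm (x + y) ≤ l1norm x + l1norm y := by
  classical
  rw [l1norm_eq_sum_of_support_subset support_add,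
    l1norm_eq_sum_of_support_subset Finset.subset_union_left,
    l1norm_eq_sum_of_support_subset Finset.subset_union_right, ← Finset.sum_add_distrib]
  exact Finset.sum_le_sum fun m _ => norm_add_le (x m) (y m)

lemma l1norm_neg (x : α →₀ E) : l1norm (-x) = l1norm x := by
  simp only [l1norm, Finsupp.sum, support_neg, Finsupp.neg_apply, norm_neg]

lemma l1norm_sub_le (x y : α →₀ E) : l1norm (x - y) ≤ l1norm x + l1norm y := by
  simpa only [sub_eq_add_neg, l1norm_neg] using l1norm_add_le x (-y)

lemma l1norm_sum_le {ι : Type*} (s : Finset ι) (y : ι → α →₀ E) :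
    l1norm (∑ i ∈ s, y i) ≤ ∑ i ∈ s, l1norm (y i) :=
  Finset.le_sum_of_subadditive (l1norm (α := α) (E := E)) l1norm_zero.le l1norm_add_le s y

variable [NormedField 𝕜] [NormedSpace 𝕜 E]

lemma l1norm_smul (c : 𝕜) (x : α →₀ E) : l1norm (c • x) = ‖c‖ * l1norm x := by
  rw [l1norm_eq_sum_of_support_subset support_smul, l1norm, Finsupp.sum, Finset.mul_sum]
  simp [norm_smul]

lemma l1norm_map_le (T : (α →₀ 𝕜) →ₗ[𝕜] β →₀ E) (x : α →₀ 𝕜) :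
    l1norm (T x) ≤ ∑ m ∈ x.support, ‖x m‖ * l1norm (T (single m 1)) := by
  have hT : T x = ∑ m ∈ x.support, x m • T (single m 1) := by
    conv_lhs => rw [← x.sum_single]
    simp [Finsupp.sum, ← map_smul]
  rw [hT]
  refine (l1norm_sum_le _ _).trans_eq ?_
  simp only [l1norm_smul]

end L1Norm

lemma l2norm_le_l1norm (x : ℤ →₀ ℂ) : l2norm x ≤ l1norm x := by
  have hsq : ∑ m ∈ x.support, ‖x m‖ ^ 2 ≤ l1norm x ^ 2 :=
    Finset.sum_sq_le_sq_sum_of_nonneg fun _ _ => norm_nonneg _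
  calc l2norm x ≤ Real.sqrt (l1norm x ^ 2) := Real.sqrt_le_sqrt hsq
    _ = l1norm x := Real.sqrt_sq (l1norm_nonneg x)

lemma A0_single (m : ℤ) (c : ℂ) :
    A0 (single m c) = c • (-Complex.I * m) • (single (m + 1) 1 - single (m - 1) 1) := by
  simp [A0]

lemma l1norm_A0_single_one_le (m : ℤ) : l1norm (A0 (single m 1)) ≤ 2 * m.natAbs := by
  have hcoeff : ‖-Complex.I * m‖ = m.natAbs := by
    simp [Nat.cast_natAbs]
  rw [A0_single, one_smul, l1norm_smul, hcoeff, mul_comm]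
  gcongr
  simpa [l1norm_single, one_add_one_eq_two] using
    l1norm_sub_le (single (m + 1) (1 : ℂ)) (single (m - 1) 1)

lemma l1norm_A0_le {x : ℤ →₀ ℂ} {M : ℕ} (hx : ∀ m ∈ x.support, m.natAbs ≤ M) :
    l1norm (A0 x) ≤ 2 * M * l1norm x := by
  refine (l1norm_map_le A0 x).trans ?_
  rw [l1norm, Finsupp.sum, Finset.mul_sum]
  refine Finset.sum_le_sum fun m hm => ?_
  rw [mul_comm (2 * (M : ℝ))]
  gcongr
  exact (l1norm_A0_single_one_le m).trans (by gcongr; exact_mod_cast hx m hm)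

lemma natAbs_le_of_mem_support_A0 {x : ℤ →₀ ℂ} {M : ℕ} (hx : ∀ m ∈ x.support, m.natAbs ≤ M) :
    ∀ m ∈ (A0 x).support, m.natAbs ≤ M + 1 := by
  classical
  intro m hm
  rw [← x.sum_single, map_finsuppSum] at hm
  obtain ⟨m', hm', hm⟩ := Finset.mem_biUnion.mp (support_sum hm)
  rw [A0_single] at hm
  have hm := (support_smul.trans support_smul).trans support_sub hm
  have := hx m' hm'
  simp only [Finset.mem_union, support_single _ one_ne_zero, Finset.mem_singleton] at hm
  omega

lemma natAbs_le_of_mem_support_A0_pow_e (n : ℤ) (k : ℕ) :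
    ∀ m ∈ ((A0 ^ k) (e n)).support, m.natAbs ≤ n.natAbs + k := by
  induction k with
  | zero =>
    intro m hm
    rw [Finset.mem_singleton.mp (support_single_subset hm)]
    omega
  | succ k ih =>
    rw [pow_succ', Module.End.mul_apply]
    exact natAbs_le_of_mem_support_A0 ih

lemma l1norm_A0_pow_e_le (n : ℤ) (k : ℕ) :
    l1norm ((A0 ^ k) (e n)) ≤ 2 ^ k * n.natAbs.ascFactorial k := by
  induction k with
  | zero => simp [e, l1norm_single]
  | succ k ih =>
    rw [pow_succ', Module.End.mul_apply]
    calc l1norm (A0 ((A0 ^ k) (e n)))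
        ≤ 2 * ↑(n.natAbs + k) * l1norm ((A0 ^ k) (e n)) :=
          l1norm_A0_le (natAbs_le_of_mem_support_A0_pow_e n k)
      _ ≤ 2 * ↑(n.natAbs + k) * (2 ^ k * n.natAbs.ascFactorial k) := by gcongr
      _ = 2 ^ (k + 1) * (n.natAbs.ascFactorial (k + 1)) := by
          rw [Nat.ascFactorial_succ]; push_cast; ring

/-- Each `eₙ` is an analytic vector for `A₀`: the series
`Σₖ (|θ|ᵏ/k!)·‖A₀ᵏ eₙ‖` converges for `|θ| < 1/2`. -/
theorem e_analytic_vector (n : ℤ) (θ : ℂ) (hθ : ‖θ‖ < 1 / 2) :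
    Summable fun k : ℕ =>
      ‖θ‖ ^ k / (Nat.factorial k : ℝ) * l2norm ((A0 ^ k) (e n)) := by
  set N := n.natAbs
  have hr : ‖2 * ‖θ‖‖ < 1 := by
    rw [Real.norm_of_nonneg (by positivity)]; linarith
  refine (summable_choose_mul_geometric_of_norm_lt_one N hr).of_nonneg_of_le
    (fun k => mul_nonneg (by positivity) (Real.sqrt_nonneg _)) fun k => ?_
  have hasc : (N.ascFactorial k : ℝ) ≤ k.factorial * (N + k).choose k := by
    exact_mod_cast (Nat.ascFactorial_le k N.le_succ).trans
      (Nat.ascFactorial_eq_factorial_mul_choose N k).le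
  calc ‖θ‖ ^ k / k.factorial * l2norm ((A0 ^ k) (e n))
      ≤ ‖θ‖ ^ k / k.factorial * (2 ^ k * N.ascFactorial k) := by
        gcongr; exact (l2norm_le_l1norm _).trans (l1norm_A0_pow_e_le n k)
    _ ≤ ‖θ‖ ^ k / k.factorial * (2 ^ k * (k.factorial * (N + k).choose k)) := by gcongr
    _ = (k + N).choose N * (2 * ‖θ‖) ^ k := by
        rw [add_comm k N, ← Nat.choose_symm_add]
        field_simp
        ring
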